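/- Let n₁, r, n₂ ≥ 1 and n₃ ≥ 1, A : Fin n₁ → Fin r → ZMod n₃ → ℂ, B : Fin r → Fin n₂ → ZMod n₃ → ℂ, and C : Fin n₁ → Fin n₂ → ZMod n₃ → ℂ. Then n₃ · Σ_{i,j,k} |(A * B) i j k − C i j k|² = Σ_{k ∈ ZMod n₃} Σ_{i,j} | (Σ_{l} Â i l k · B̂ l j k) − Ĉ i j k |², i.e., the squared Frobenius distance from the t-product A*B to C equals 1/n₃ times the sum over frequencies k of the squared Frobenius distances between the products of Fourier-domain frontal slices and the Fourier-domain slices of C. -/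

import Mathlib

/-!
Along the third mode, `dft3` is the discrete Fourier transform on `ZMod n₃`, which turns the
circular convolution inside the t-product into the products of Fourier-domain frontal slices.
The identity is then Parseval's formula `∑ₖ |f̂ k|² = n₃ ∑ₘ |f m|²`, applied to each tube
`(A * B - C) i j`.
-/

open Finset

/-- Mode-3 discrete Fourier transform of a third-order tensor. -/
noncomputable def dft3 {n₁ n₂ n₃ : ℕ} [NeZero n₃]
    (A : Fin n₁ → Fin n₂ → ZMod n₃ → ℂ) : Fin n₁ → Fin n₂ → ZMod n₃ → ℂ :=
  fun i j k => ∑ m : ZMod n₃,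
    A i j m * Complex.exp (-(2 * (Real.pi : ℂ) * Complex.I *
      ((k.val : ℂ) * (m.val : ℂ))) / (n₃ : ℂ))

/-- The t-product: matrix multiplication combined with circular convolution
along the third mode. -/
noncomputable def tProd3 {n₁ r n₂ n₃ : ℕ} [NeZero n₃]
    (A : Fin n₁ → Fin r → ZMod n₃ → ℂ) (B : Fin r → Fin n₂ → ZMod n₃ → ℂ) :
    Fin n₁ → Fin n₂ → ZMod n₃ → ℂ :=
  fun i j k => ∑ l : Fin r, ∑ m : ZMod n₃, A i l m * B l j (k - m)

open scoped ComplexConjugate ZMod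

namespace ZMod

variable {N : ℕ} [NeZero N]

lemma dft_convolution_apply (f g : ZMod N → ℂ) (k : ZMod N) :
    𝓕 (fun x ↦ ∑ m, f m * g (x - m)) k = 𝓕 f k * 𝓕 g k := by
  calc 𝓕 (fun x ↦ ∑ m, f m * g (x - m)) k
      = ∑ m, ∑ x, stdAddChar (-(x * k)) * (f m * g (x - m)) := by
        simp only [dft_apply, smul_eq_mul, mul_sum]
        exact sum_comm
    _ = ∑ m, ∑ n, stdAddChar (-((m + n) * k)) * (f m * g n) :=
        sum_congr rfl fun m _ ↦
          (Fintype.sum_equiv (Equiv.addLeft m) _ _ fun n ↦ by simp).symm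
    _ = 𝓕 f k * 𝓕 g k := by
        rw [dft_apply, dft_apply, sum_mul_sum]
        refine sum_congr rfl fun m _ ↦ sum_congr rfl fun n _ ↦ ?_
        rw [add_mul, neg_add, AddChar.map_add_eq_mul, smul_eq_mul, smul_eq_mul]
        exact mul_mul_mul_comm _ _ _ _

lemma sum_dft_mul_conj_dft (f g : ZMod N → ℂ) :
    ∑ k, 𝓕 f k * conj (𝓕 g k) = N * ∑ j, f j * conj (g j) := by
  have orthogonality (j j' : ZMod N) :
      ∑ k, stdAddChar (k * (j' - j)) = if j = j' then (N : ℂ) else 0 := by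
    rw [AddChar.sum_mulShift _ (isPrimitive_stdAddChar N)]
    simp [sub_eq_zero, eq_comm]
  calc ∑ k, 𝓕 f k * conj (𝓕 g k)
      = ∑ k, ∑ j, ∑ j', f j * conj (g j') * stdAddChar (k * (j' - j)) := by
        refine sum_congr rfl fun k _ ↦ ?_
        rw [dft_apply, dft_apply, map_sum, sum_mul_sum]
        refine sum_congr rfl fun j _ ↦ sum_congr rfl fun j' _ ↦ ?_
        rw [smul_eq_mul, smul_eq_mul, map_mul, ← AddChar.map_neg_eq_conj, neg_neg, mul_sub,
          sub_eq_neg_add, AddChar.map_add_eq_mul, mul_comm k j, mul_comm k j']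
        ring
    _ = ∑ j, ∑ j', f j * conj (g j') * ∑ k, stdAddChar (k * (j' - j)) := by
        rw [sum_comm]
        simp only [mul_sum]
        exact sum_congr rfl fun j _ ↦ sum_comm
    _ = N * ∑ j, f j * conj (g j) := by
        simp [orthogonality, mul_sum, mul_comm]

lemma sum_norm_dft_sq (f : ZMod N → ℂ) :
    ∑ k, ‖𝓕 f k‖ ^ 2 = N * ∑ j, ‖f j‖ ^ 2 := by
  have := sum_dft_mul_conj_dft f f
  simp only [Complex.mul_conj'] at this
  exact_mod_cast this

end ZMod

lemma dft3_apply {n₁ n₂ n₃ : ℕ} [NeZero n₃] (X : Fin n₁ → Fin n₂ → ZMod n₃ → ℂ)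
    (i : Fin n₁) (j : Fin n₂) (k : ZMod n₃) : dft3 X i j k = 𝓕 (X i j) k := by
  refine sum_congr rfl fun m _ ↦ ?_
  have hcast : -(m * k) = ((-(m.val * k.val : ℕ) : ℤ) : ZMod n₃) := by simp
  rw [smul_eq_mul, mul_comm, hcast, ZMod.stdAddChar_coe]
  congr 2
  push_cast
  ring

theorem tprod_frobenius_distance_general {n₁ r n₂ n₃ : ℕ}
    [NeZero n₃]
    (A : Fin n₁ → Fin r → ZMod n₃ → ℂ) (B : Fin r → Fin n₂ → ZMod n₃ → ℂ)
    (C : Fin n₁ → Fin n₂ → ZMod n₃ → ℂ) :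
    (n₃ : ℝ) * (∑ i : Fin n₁, ∑ j : Fin n₂, ∑ k : ZMod n₃,
        ‖tProd3 A B i j k - C i j k‖ ^ 2) =
      ∑ k : ZMod n₃, ∑ i : Fin n₁, ∑ j : Fin n₂,
        ‖(∑ l : Fin r, dft3 A i l k * dft3 B l j k) -
          dft3 C i j k‖ ^ 2 := by
  have htube (i : Fin n₁) (j : Fin n₂) :
      tProd3 A B i j = ∑ l, fun x ↦ ∑ m, A i l m * B l j (x - m) := by
    ext x
    simp only [tProd3, Finset.sum_apply]
  have hdft (i : Fin n₁) (j : Fin n₂) (k : ZMod n₃) :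
      (∑ l, dft3 A i l k * dft3 B l j k) - dft3 C i j k = 𝓕 (tProd3 A B i j - C i j) k := by
    simp only [dft3_apply, htube, map_sub, map_sum, Pi.sub_apply, Finset.sum_apply,
      ZMod.dft_convolution_apply]
  calc (n₃ : ℝ) * ∑ i, ∑ j, ∑ k, ‖tProd3 A B i j k - C i j k‖ ^ 2
      = ∑ i, ∑ j, ∑ k, ‖𝓕 (tProd3 A B i j - C i j) k‖ ^ 2 := by
        simp only [mul_sum, ZMod.sum_norm_dft_sq, Pi.sub_apply]
    _ = _ := by
        simp only [hdft]
        symm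
        rw [sum_comm]
        exact sum_congr rfl fun i _ ↦ sum_comm

/-- The squared Frobenius distance from `A * B` to `C` equals `1/n₃` times the
sum over frequencies of the squared Frobenius distances between the products of
the Fourier-domain frontal slices and the Fourier-domain slices of `C`. -/
theorem tprod_frobenius_distance {n₁ r n₂ n₃ : ℕ}
    (hn₁ : 1 ≤ n₁) (hr : 1 ≤ r) (hn₂ : 1 ≤ n₂) [NeZero n₃]
    (A : Fin n₁ → Fin r → ZMod n₃ → ℂ) (B : Fin r → Fin n₂ → ZMod n₃ → ℂ)
    (C : Fin n₁ → Fin n₂ → ZMod n₃ → ℂ) :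
    (n₃ : ℝ) * (∑ i : Fin n₁, ∑ j : Fin n₂, ∑ k : ZMod n₃,
        ‖tProd3 A B i j k - C i j k‖ ^ 2) =
      ∑ k : ZMod n₃, ∑ i : Fin n₁, ∑ j : Fin n₂,
        ‖(∑ l : Fin r, dft3 A i l k * dft3 B l j k) -
          dft3 C i j k‖ ^ 2 :=
  tprod_frobenius_distance_general A B C
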